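/- arXiv:math/0206268 — 5 statements merged into one kernel-verified Lean document; each statement's English description precedes it below -/
import Mathlib

section
/- Let K be a field of characteristic zero, let r ≥ 0, let s ∈ K, and let g₀, g₁, …, g_r ∈ K[x] be nonzero polynomials whose orders of vanishing at s are α₀ < α₁ < ⋯ < α_r (a strictly increasing sequence of natural numbers). Then the Wronskian W = det((d/dx)^i g_j)_{0 ≤ i,j ≤ r} is a nonzero polynomial, and its order of vanishing at s is exactly Σ_{i=0}^{r} (α_i − i). -/
open Polynomial

/-- The Wronskian of a family of `r+1` polynomials: the determinant of the
`(r+1) × (r+1)` matrix whose `(i,j)` entry is the `i`-th formal derivative of the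
`j`-th polynomial. -/
noncomputable def wronskianFam {K : Type*} [CommRing K] {r : ℕ}
    (g : Fin (r + 1) → K[X]) : K[X] :=
  Matrix.det (Matrix.of fun i j : Fin (r + 1) => derivative^[(i : ℕ)] (g j))

/-! The Taylor shift by `s` reduces the theorem to `s = 0`, where the order of vanishing is the
trailing degree. Multiplying row `i` of the Wronskian matrix by `X ^ i` makes every entry of
column `j` divisible by `X ^ αⱼ`, and `X ^ i * (d/dX)^i` multiplies the coefficient of `X ^ m` by
the falling factorial `m (m - 1) ⋯ (m - i + 1)`. Pulling `X ^ αⱼ` out of each column shows that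
`X ^ ∑ (αᵢ - i)` divides the Wronskian, with coefficient the product of the trailing coefficients
of the `gⱼ` times `det ((αⱼ)_i)`. The latter is a Vandermonde determinant in the distinct `αⱼ`,
nonzero in characteristic zero. -/

open Finset in
lemma Fin.val_le_of_strictMono {n : ℕ} {α : Fin n → ℕ} (hα : StrictMono α) (i : Fin n) :
    (i : ℕ) ≤ α i :=
  calc (i : ℕ) = #(Iio i) := (Fin.card_Iio i).symm
    _ ≤ #(range (α i)) := card_le_card_of_injOn α
          (fun _ hj => mem_range.2 (hα (mem_Iio.1 hj))) hα.injective.injOn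
    _ = α i := card_range _

lemma Matrix.det_descFactorial_ne_zero {K : Type*} [CommRing K] [IsDomain K] [CharZero K]
    {n : ℕ} {α : Fin n → ℕ} (hα : Function.Injective α) :
    (Matrix.of fun i j : Fin n => ((α j).descFactorial i : K)).det ≠ 0 := by
  have hT : (Matrix.of fun i j : Fin n => ((α j).descFactorial i : K)) =
      (Matrix.of fun i j : Fin n => (descPochhammer K j).eval (α i : K)).transpose := by
    ext i j
    simp [descPochhammer_eval_eq_descFactorial]
  rw [hT, Matrix.det_transpose, ← det_eval_matrixOfPolynomials_eq_det_vandermonde _ _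
    (descPochhammer_natDegree K ·) (monic_descPochhammer K ·), Matrix.det_vandermonde_ne_zero_iff]
  exact Nat.cast_injective.comp hα

namespace Polynomial

section CommRing

variable {R : Type*} [CommRing R]

lemma coeff_X_pow_mul_iterate_derivative (p : R[X]) (i m : ℕ) :
    (X ^ i * derivative^[i] p).coeff m = m.descFactorial i • p.coeff m := by
  rcases lt_or_ge m i with h | h
  · rw [coeff_X_pow_mul', if_neg h.not_ge, Nat.descFactorial_eq_zero_iff_lt.mpr h, zero_smul]
  · rw [coeff_X_pow_mul', if_pos h, coeff_iterate_derivative, Nat.sub_add_cancel h]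

lemma X_pow_dvd_X_pow_mul_iterate_derivative {p : R[X]} {m : ℕ} (hp : X ^ m ∣ p) (i : ℕ) :
    X ^ m ∣ X ^ i * derivative^[i] p :=
  calc X ^ m ∣ X ^ i * X ^ (m - i) := by rw [← pow_add]; exact pow_dvd_pow X (by omega)
    _ ∣ _ := mul_dvd_mul_left _ (pow_sub_dvd_iterate_derivative_of_pow_dvd i hp)

section Matrix

variable {n : Type*} [Fintype n] [DecidableEq n]

lemma det_of_X_pow_mul (C : n → n → R[X]) (α : n → ℕ) :
    (Matrix.of fun i j => X ^ α j * C i j).det = (X ^ ∑ j, α j) * (Matrix.of C).det := by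
  rw [← Finset.prod_pow_eq_pow_sum, ← Matrix.det_mul_row]
  rfl

lemma X_pow_sum_dvd_det {B : Matrix n n R[X]} {α : n → ℕ} (h : ∀ i j, X ^ α j ∣ B i j) :
    X ^ ∑ j, α j ∣ B.det := by
  choose C hC using h
  rw [show B = Matrix.of fun i j => X ^ α j * C i j from Matrix.ext hC, det_of_X_pow_mul]
  exact dvd_mul_right _ _

lemma coeff_det_of_X_pow_dvd {B : Matrix n n R[X]} {α : n → ℕ}
    (h : ∀ i j, X ^ α j ∣ B i j) :
    B.det.coeff (∑ j, α j) = (Matrix.of fun i j => (B i j).coeff (α j)).det := by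
  choose C hC using h
  rw [show B = Matrix.of fun i j => X ^ α j * C i j from Matrix.ext hC, det_of_X_pow_mul,
    coeff_X_pow_mul', if_pos le_rfl, Nat.sub_self, ← constantCoeff_apply, RingHom.map_det]
  congr 1
  ext i j
  simp [coeff_X_pow_mul']

end Matrix

lemma iterate_derivative_taylor (p : R[X]) (s : R) (i : ℕ) :
    derivative^[i] (taylor s p) = taylor s (derivative^[i] p) := by
  induction i with
  | zero => rfl
  | succ i ih =>
    rw [Function.iterate_succ_apply', Function.iterate_succ_apply', ih, taylor_apply,
      taylor_apply, derivative_comp]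
    simp

lemma wronskianFam_taylor {r : ℕ} (g : Fin (r + 1) → R[X]) (s : R) :
    wronskianFam (fun j => taylor s (g j)) = taylor s (wronskianFam g) := by
  rw [wronskianFam, wronskianFam]
  change _ = taylorAlgHom s _
  rw [AlgHom.map_det]
  congr 1
  ext i j
  simp [iterate_derivative_taylor]

lemma det_X_pow_mul_iterate_derivative {r : ℕ} (g : Fin (r + 1) → R[X]) :
    (Matrix.of fun i j : Fin (r + 1) => X ^ (i : ℕ) * derivative^[i] (g j)).det =
      (X ^ ∑ i : Fin (r + 1), (i : ℕ)) * wronskianFam g := by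
  rw [wronskianFam, ← Finset.prod_pow_eq_pow_sum, ← Matrix.det_mul_column]
  rfl

section Wronskian

variable {r : ℕ} {h : Fin (r + 1) → R[X]} {α : Fin (r + 1) → ℕ}

lemma sum_eq_sum_val_add_sum_tsub (hle : ∀ i : Fin (r + 1), (i : ℕ) ≤ α i) :
    ∑ i, α i = ∑ i : Fin (r + 1), (i : ℕ) + ∑ i, (α i - (i : ℕ)) := by
  rw [← Finset.sum_add_distrib]
  exact Finset.sum_congr rfl fun i _ => (Nat.add_sub_cancel' (hle i)).symm

lemma X_pow_dvd_wronskianFam (hdvd : ∀ j, X ^ α j ∣ h j)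
    (hle : ∀ i : Fin (r + 1), (i : ℕ) ≤ α i) :
    X ^ ∑ i, (α i - (i : ℕ)) ∣ wronskianFam h := by
  have := X_pow_sum_dvd_det
    (B := Matrix.of fun i j : Fin (r + 1) => X ^ (i : ℕ) * derivative^[i] (h j))
    fun i j => X_pow_dvd_X_pow_mul_iterate_derivative (hdvd j) i
  rwa [det_X_pow_mul_iterate_derivative, sum_eq_sum_val_add_sum_tsub hle, pow_add,
    (isRegular_X_pow _).left.dvd_cancel_left] at this

lemma coeff_wronskianFam (hdvd : ∀ j, X ^ α j ∣ h j)
    (hle : ∀ i : Fin (r + 1), (i : ℕ) ≤ α i) :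
    (wronskianFam h).coeff (∑ i, (α i - (i : ℕ))) =
      (∏ j, (h j).coeff (α j)) *
        (Matrix.of fun i j : Fin (r + 1) => ((α j).descFactorial i : R)).det := by
  have := coeff_det_of_X_pow_dvd
    (B := Matrix.of fun i j : Fin (r + 1) => X ^ (i : ℕ) * derivative^[i] (h j))
    fun i j => X_pow_dvd_X_pow_mul_iterate_derivative (hdvd j) i
  rw [det_X_pow_mul_iterate_derivative, sum_eq_sum_val_add_sum_tsub hle, coeff_X_pow_mul',
    if_pos (Nat.le_add_right _ _), Nat.add_sub_cancel_left] at this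
  rw [this, ← Matrix.det_mul_row]
  congr 1
  ext i j
  simp [coeff_X_pow_mul_iterate_derivative, mul_comm]

end Wronskian

end CommRing

lemma natTrailingDegree_eq_of_X_pow_dvd_of_coeff_ne_zero {R : Type*} [Semiring R] {p : R[X]}
    {n : ℕ} (hdvd : X ^ n ∣ p) (hn : p.coeff n ≠ 0) : p.natTrailingDegree = n :=
  le_antisymm (natTrailingDegree_le_of_ne_zero hn)
    (le_natTrailingDegree (fun hp => hn (by rw [hp, coeff_zero])) (X_pow_dvd_iff.1 hdvd))

theorem natTrailingDegree_wronskianFam {K : Type*} [CommRing K] [IsDomain K] [CharZero K]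
    {r : ℕ} {h : Fin (r + 1) → K[X]} {α : Fin (r + 1) → ℕ} (hh : ∀ i, h i ≠ 0)
    (hα : ∀ i, (h i).natTrailingDegree = α i) (hmono : StrictMono α) :
    wronskianFam h ≠ 0 ∧ (wronskianFam h).natTrailingDegree = ∑ i, (α i - (i : ℕ)) := by
  have hdvd : ∀ j, X ^ α j ∣ h j := fun j =>
    X_pow_dvd_iff.2 fun d hd => coeff_eq_zero_of_lt_natTrailingDegree (hα j ▸ hd)
  have hle := Fin.val_le_of_strictMono hmono
  have hcoeff : (wronskianFam h).coeff (∑ i, (α i - (i : ℕ))) ≠ 0 := by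
    rw [coeff_wronskianFam hdvd hle]
    refine mul_ne_zero (Finset.prod_ne_zero_iff.2 fun j _ => ?_)
      (Matrix.det_descFactorial_ne_zero hmono.injective)
    rw [← hα j]
    exact trailingCoeff_nonzero_iff_nonzero.2 (hh j)
  exact ⟨fun hW => hcoeff (by rw [hW, coeff_zero]),
    natTrailingDegree_eq_of_X_pow_dvd_of_coeff_ne_zero (X_pow_dvd_wronskianFam hdvd hle) hcoeff⟩

end Polynomial

/-- If `g₀, …, g_r` are nonzero polynomials over a field of characteristic zero whose
orders of vanishing at `s` form a strictly increasing sequence `α₀ < α₁ < ⋯ < α_r`,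
then their Wronskian is nonzero and vanishes at `s` to order exactly `Σ (αᵢ − i)`. -/
theorem wronskian_rootMultiplicity {K : Type*} [Field K] [CharZero K] (r : ℕ) (s : K)
    (g : Fin (r + 1) → K[X]) (α : Fin (r + 1) → ℕ)
    (hg : ∀ i, g i ≠ 0)
    (hord : ∀ i, rootMultiplicity s (g i) = α i)
    (hmono : StrictMono α) :
    wronskianFam g ≠ 0 ∧
      rootMultiplicity s (wronskianFam g) = ∑ i : Fin (r + 1), (α i - (i : ℕ)) := by
  have hτ : ∀ i, (taylor s (g i)).natTrailingDegree = α i := fun i => by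
    rw [taylor_apply, ← rootMultiplicity_eq_natTrailingDegree, hord]
  obtain ⟨hW, hN⟩ :=
    natTrailingDegree_wronskianFam (fun i => (taylor_eq_zero s (g i)).not.2 (hg i)) hτ hmono
  rw [wronskianFam_taylor] at hW hN
  exact ⟨fun h0 => hW (by rw [h0, map_zero]),
    by rw [rootMultiplicity_eq_natTrailingDegree, ← taylor_apply, hN]⟩
end

section
/- Let K be a field of characteristic zero, let s ∈ K, and let φ₀, φ₁, φ₂ ∈ K[x] be nonzero polynomials whose orders of vanishing at s are 0, α₁, α₂ respectively, where 0 < α₁ < α₂. Then the three 2×2 Wronskian minors m₀₁ = φ₀φ₁′ − φ₁φ₀′, m₀₂ = φ₀φ₂′ − φ₂φ₀′ and m₁₂ = φ₁φ₂′ − φ₂φ₁′ vanish at s to orders exactly α₁ − 1, α₂ − 1 and α₁ + α₂ − 1 respectively. Consequently, after dividing each minor by (x−s)^{α₁−1}, the resulting triple has orders of vanishing at s equal to 0, α₂ − α₁ and α₂; that is, the dual curve has ramification sequence (0, α₂ − α₁, α₂) at a point where the original plane curve has ramification sequence (0, α₁, α₂). -/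
/-!
Write `f = (X - s)^a u` and `g = (X - s)^b v` with `u(s), v(s) ≠ 0`. The Leibniz rule gives
`W(f, g) = (X - s)^(a+b-1) ((b - a) u v + (X - s) W(u, v))`, and the second factor takes the
value `(b - a) u(s) v(s) ≠ 0` at `s` as soon as `a ≠ b` in characteristic zero.
-/

open Polynomial

section CommRing

variable {R : Type*} [CommRing R]

lemma X_sub_C_mul_derivative_X_sub_C_pow (s : R) (n : ℕ) :
    (X - C s) * derivative ((X - C s) ^ n) = C (n : R) * (X - C s) ^ n := by
  cases n with
  | zero => simp
  | succ n => rw [derivative_X_sub_C_pow, Nat.add_sub_cancel]; ring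

lemma X_sub_C_mul_wronskian_X_sub_C_pow_mul (s : R) (a b : ℕ) (u v : R[X]) :
    (X - C s) * wronskian ((X - C s) ^ a * u) ((X - C s) ^ b * v) =
      (X - C s) ^ (a + b) * (C ((b : R) - a) * (u * v) + (X - C s) * wronskian u v) := by
  simp only [wronskian, derivative_mul, map_sub]
  linear_combination (u * v * (X - C s) ^ a) * X_sub_C_mul_derivative_X_sub_C_pow s b -
    (u * v * (X - C s) ^ b) * X_sub_C_mul_derivative_X_sub_C_pow s a

lemma rootMultiplicity_X_sub_C_pow_mul_of_not_isRoot [IsDomain R] {p : R[X]} {s : R}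
    (hp : ¬p.IsRoot s) (n : ℕ) : rootMultiplicity s ((X - C s) ^ n * p) = n := by
  have hp₀ : p ≠ 0 := fun h => hp (by simp [h])
  rw [mul_comm, rootMultiplicity_mul_X_sub_C_pow hp₀, rootMultiplicity_eq_zero hp, zero_add]

lemma exists_eq_X_sub_C_pow_mul_of_le_rootMultiplicity [IsDomain R] {p : R[X]} {s : R}
    (hp : p ≠ 0) {k : ℕ} (hk : k ≤ rootMultiplicity s p) :
    ∃ q : R[X], p = (X - C s) ^ k * q ∧ rootMultiplicity s q = rootMultiplicity s p - k := by
  obtain ⟨q, hq⟩ := (le_rootMultiplicity_iff hp).mp hk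
  refine ⟨q, hq, ?_⟩
  rw [hq, rootMultiplicity_mul (hq ▸ hp), rootMultiplicity_X_sub_C_pow, Nat.add_sub_cancel_left]

end CommRing

section CharZero

variable {R : Type*} [CommRing R] [IsDomain R] [CharZero R]

lemma exists_wronskian_eq_X_sub_C_pow_mul_not_isRoot {f g : R[X]} {s : R}
    (hf : f ≠ 0) (hg : g ≠ 0) (hfg : rootMultiplicity s f < rootMultiplicity s g) :
    ∃ w : R[X], wronskian f g =
      (X - C s) ^ (rootMultiplicity s f + rootMultiplicity s g - 1) * w ∧ ¬w.IsRoot s := by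
  set a := rootMultiplicity s f
  set b := rootMultiplicity s g
  set u := f /ₘ (X - C s) ^ a
  set v := g /ₘ (X - C s) ^ b
  refine ⟨C ((b : R) - a) * (u * v) + (X - C s) * wronskian u v, ?_, ?_⟩
  · apply mul_left_cancel₀ (X_sub_C_ne_zero s)
    rw [← mul_assoc, ← pow_succ', Nat.sub_add_cancel (by omega),
      ← X_sub_C_mul_wronskian_X_sub_C_pow_mul, pow_mul_divByMonic_rootMultiplicity_eq,
      pow_mul_divByMonic_rootMultiplicity_eq]
  · have hba : (b : R) - a ≠ 0 := sub_ne_zero.mpr (Nat.cast_injective.ne hfg.ne')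
    simpa [IsRoot] using mul_ne_zero hba (mul_ne_zero
      (eval_divByMonic_pow_rootMultiplicity_ne_zero s hf)
      (eval_divByMonic_pow_rootMultiplicity_ne_zero s hg))

lemma wronskian_ne_zero_and_rootMultiplicity_eq {f g : R[X]} {s : R}
    (hf : f ≠ 0) (hg : g ≠ 0) (hfg : rootMultiplicity s f < rootMultiplicity s g) :
    wronskian f g ≠ 0 ∧
      rootMultiplicity s (wronskian f g) = rootMultiplicity s f + rootMultiplicity s g - 1 := by
  obtain ⟨w, hW, hw⟩ := exists_wronskian_eq_X_sub_C_pow_mul_not_isRoot hf hg hfg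
  have hw₀ : w ≠ 0 := fun h => hw (by simp [h])
  rw [hW]
  exact ⟨mul_ne_zero (pow_ne_zero _ (X_sub_C_ne_zero s)) hw₀,
    rootMultiplicity_X_sub_C_pow_mul_of_not_isRoot hw _⟩

end CharZero

/-- Let `φ₀, φ₁, φ₂` be nonzero polynomials over a field of characteristic zero, with
orders of vanishing `0, α₁, α₂` at `s`, where `0 < α₁ < α₂`.  Then the `2×2` Wronskian
minors `m₀₁ = φ₀φ₁′ − φ₁φ₀′`, `m₀₂ = φ₀φ₂′ − φ₂φ₀′`, `m₁₂ = φ₁φ₂′ − φ₂φ₁′` vanish at `s`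
to orders exactly `α₁ − 1`, `α₂ − 1` and `α₁ + α₂ − 1`.  Consequently, after dividing
each minor by `(x − s)^(α₁−1)`, the resulting triple has orders of vanishing `0`,
`α₂ − α₁` and `α₂` at `s`: the dual curve has ramification `(0, α₂ − α₁, α₂)` where the
original curve has ramification `(0, α₁, α₂)`. -/
theorem dual_curve_ramification {K : Type*} [Field K] [CharZero K]
    (s : K) (φ₀ φ₁ φ₂ : K[X]) (α₁ α₂ : ℕ)
    (h₀ : φ₀ ≠ 0) (h₁ : φ₁ ≠ 0) (h₂ : φ₂ ≠ 0)
    (hord₀ : rootMultiplicity s φ₀ = 0)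
    (hord₁ : rootMultiplicity s φ₁ = α₁)
    (hord₂ : rootMultiplicity s φ₂ = α₂)
    (hα₁ : 0 < α₁) (hα₁₂ : α₁ < α₂) :
    (φ₀ * derivative φ₁ - φ₁ * derivative φ₀ ≠ 0 ∧
      rootMultiplicity s (φ₀ * derivative φ₁ - φ₁ * derivative φ₀) = α₁ - 1) ∧
    (φ₀ * derivative φ₂ - φ₂ * derivative φ₀ ≠ 0 ∧
      rootMultiplicity s (φ₀ * derivative φ₂ - φ₂ * derivative φ₀) = α₂ - 1) ∧
    (φ₁ * derivative φ₂ - φ₂ * derivative φ₁ ≠ 0 ∧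
      rootMultiplicity s (φ₁ * derivative φ₂ - φ₂ * derivative φ₁) = α₁ + α₂ - 1) ∧
    ∃ ψ₀₁ ψ₀₂ ψ₁₂ : K[X],
      φ₀ * derivative φ₁ - φ₁ * derivative φ₀ = (X - C s) ^ (α₁ - 1) * ψ₀₁ ∧
      φ₀ * derivative φ₂ - φ₂ * derivative φ₀ = (X - C s) ^ (α₁ - 1) * ψ₀₂ ∧
      φ₁ * derivative φ₂ - φ₂ * derivative φ₁ = (X - C s) ^ (α₁ - 1) * ψ₁₂ ∧
      rootMultiplicity s ψ₀₁ = 0 ∧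
      rootMultiplicity s ψ₀₂ = α₂ - α₁ ∧
      rootMultiplicity s ψ₁₂ = α₂ := by
  have hminor (f g : K[X]) : f * derivative g - g * derivative f = wronskian f g := by
    rw [wronskian, mul_comm g]
  simp only [hminor]
  obtain ⟨hne₀₁, hm₀₁⟩ := wronskian_ne_zero_and_rootMultiplicity_eq (s := s) h₀ h₁ (by omega)
  obtain ⟨hne₀₂, hm₀₂⟩ := wronskian_ne_zero_and_rootMultiplicity_eq (s := s) h₀ h₂ (by omega)
  obtain ⟨hne₁₂, hm₁₂⟩ := wronskian_ne_zero_and_rootMultiplicity_eq (s := s) h₁ h₂ (by omega)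
  simp only [hord₀, hord₁, hord₂, zero_add] at hm₀₁ hm₀₂ hm₁₂
  obtain ⟨ψ₀₁, he₀₁, hψ₀₁⟩ :=
    exists_eq_X_sub_C_pow_mul_of_le_rootMultiplicity (s := s) (k := α₁ - 1) hne₀₁ (by omega)
  obtain ⟨ψ₀₂, he₀₂, hψ₀₂⟩ :=
    exists_eq_X_sub_C_pow_mul_of_le_rootMultiplicity (s := s) (k := α₁ - 1) hne₀₂ (by omega)
  obtain ⟨ψ₁₂, he₁₂, hψ₁₂⟩ :=
    exists_eq_X_sub_C_pow_mul_of_le_rootMultiplicity (s := s) (k := α₁ - 1) hne₁₂ (by omega)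
  exact ⟨⟨hne₀₁, by omega⟩, ⟨hne₀₂, by omega⟩, ⟨hne₁₂, hm₁₂⟩,
    ψ₀₁, ψ₀₂, ψ₁₂, he₀₁, he₀₂, he₁₂, by omega, by omega, by omega⟩
end

section
/- For every integer k ≥ 1, let T_k denote the Chebyshev polynomial of the first kind of degree k, and define f_k(x,y) = y² − 2y·T_k(x+2) + 1. Then the set of singular real points of the curve f_k = 0, namely {(x,y) ∈ ℝ² : f_k(x,y) = 0, ∂f_k/∂x(x,y) = 0, ∂f_k/∂y(x,y) = 0}, has exactly k−1 elements, and each of these points is an isolated point of the real zero set {(x,y) ∈ ℝ² : f_k(x,y) = 0} (a solitary point of the curve). -/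
/-- The polynomial `f_k(x,y) = y² − 2y·T_k(x+2) + 1` as a polynomial in two variables,
where `T_k` is the Chebyshev polynomial of the first kind of degree `k`. -/
noncomputable def chebCurve (k : ℕ) : MvPolynomial (Fin 2) ℝ :=
  MvPolynomial.X 1 ^ 2 -
    2 * MvPolynomial.X 1 *
      Polynomial.aeval (MvPolynomial.X 0 + 2 : MvPolynomial (Fin 2) ℝ)
        (Polynomial.Chebyshev.T ℝ (k : ℤ)) + 1

/-- The real zero set of `f_k`. -/
def chebZeros (k : ℕ) : Set (ℝ × ℝ) :=
  {p | MvPolynomial.eval ![p.1, p.2] (chebCurve k) = 0}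

/-- The set of singular real points of the curve `f_k = 0`. -/
def chebSing (k : ℕ) : Set (ℝ × ℝ) :=
  {p | MvPolynomial.eval ![p.1, p.2] (chebCurve k) = 0 ∧
    MvPolynomial.eval ![p.1, p.2] (MvPolynomial.pderiv 0 (chebCurve k)) = 0 ∧
    MvPolynomial.eval ![p.1, p.2] (MvPolynomial.pderiv 1 (chebCurve k)) = 0}

/-!
With `u = x + 2` the curve reads `(y - T_k(u))² = T_k(u)² - 1`. Its singular points are the
points `(u - 2, T_k(u))` with `T_k'(u) = 0`, i.e. the `k - 1` interior nodes `u = cos(jπ/k)`,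
where `|T_k(u)| = 1`. Such a node lies in `(-1, 1)`, where `|T_k| ≤ 1`, so near it the curve
forces `T_k(u)² = 1`; this equation has finitely many solutions, so `u` is isolated, and then
`y = T_k(u)` is determined.
-/

open Polynomial Polynomial.Chebyshev Filter Topology

lemma MvPolynomial.eval_aeval_polynomial {R σ : Type*} [CommSemiring R] (v : σ → R)
    (q : MvPolynomial σ R) (p : R[X]) :
    MvPolynomial.eval v (Polynomial.aeval q p) = p.eval (MvPolynomial.eval v q) := by
  simpa [MvPolynomial.coe_aeval_eq_eval] using (aeval_algHom_apply (MvPolynomial.aeval v) q p).symm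

lemma MvPolynomial.pderiv_ofNat {R σ : Type*} [CommSemiring R] (i : σ) (n : ℕ) [n.AtLeastTwo] :
    pderiv i (no_index (OfNat.ofNat n : MvPolynomial σ R)) = 0 := by
  rw [← Nat.cast_ofNat, Derivation.map_natCast]

lemma eval_chebCurve (k : ℕ) (x y : ℝ) :
    MvPolynomial.eval ![x, y] (chebCurve k) = y ^ 2 - 2 * y * (T ℝ k).eval (x + 2) + 1 := by
  simp [chebCurve, MvPolynomial.eval_aeval_polynomial, -aeval_T]

lemma eval_pderiv_zero_chebCurve (k : ℕ) (x y : ℝ) :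
    MvPolynomial.eval ![x, y] (MvPolynomial.pderiv 0 (chebCurve k)) =
      -(2 * y * (derivative (T ℝ k)).eval (x + 2)) := by
  simp [chebCurve, MvPolynomial.eval_aeval_polynomial, Derivation.map_aeval,
    MvPolynomial.pderiv_ofNat, -aeval_T]

lemma eval_pderiv_one_chebCurve (k : ℕ) (x y : ℝ) :
    MvPolynomial.eval ![x, y] (MvPolynomial.pderiv 1 (chebCurve k)) =
      2 * y - 2 * (T ℝ k).eval (x + 2) := by
  simp [chebCurve, MvPolynomial.eval_aeval_polynomial, Derivation.map_aeval,
    MvPolynomial.pderiv_ofNat, -aeval_T]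
  ring

namespace Polynomial.Chebyshev

theorem setOf_eval_derivative_T_real_eq_zero {n : ℕ} (hn : n ≠ 0) :
    {x : ℝ | (derivative (T ℝ n)).eval x = 0} = node n '' Finset.Ioo 0 n := by
  ext x
  constructor
  · intro hx
    rw [Set.mem_ofPred_eq, T_derivative_eq_U, eval_mul, eval_intCast, mul_eq_zero, Int.cast_eq_zero,
      Nat.cast_eq_zero, or_iff_right hn, show (n : ℤ) - 1 = (n - 1 : ℕ) by omega, ← IsRoot.def,
      ← mem_roots (U_ne_zero ℝ _ (by omega)), roots_U_real, Finset.mem_val, Finset.mem_image] at hx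
    obtain ⟨j, hj, rfl⟩ := hx
    refine ⟨j + 1, by simp at hj ⊢; omega, ?_⟩
    simp [node, Nat.cast_sub (Nat.one_le_iff_ne_zero.2 hn)]
  · rintro ⟨i, hi, rfl⟩
    rw [Finset.mem_coe, Finset.mem_Ioo] at hi
    rw [Set.mem_ofPred_eq, ← Polynomial.deriv]
    exact (isLocalExtr_T_real hn hi.1 hi.2).deriv_eq_zero

theorem ncard_setOf_eval_derivative_T_real_eq_zero {n : ℕ} (hn : n ≠ 0) :
    {x : ℝ | (derivative (T ℝ n)).eval x = 0}.ncard = n - 1 := by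
  rw [setOf_eval_derivative_T_real_eq_zero hn,
    ((strictAntiOn_node n).injOn.mono fun i hi => by simp at hi ⊢; omega).ncard_image,
    Set.ncard_coe_finset, Nat.card_Ioo, Nat.sub_zero]

lemma sq_eval_T_real_of_eval_derivative_eq_zero {n : ℕ} {x : ℝ}
    (hx : (derivative (T ℝ n)).eval x = 0) : (T ℝ n).eval x ^ 2 = 1 := by
  rcases eq_or_ne n 0 with rfl | hn
  · simp
  obtain ⟨i, hi, rfl⟩ : x ∈ node n '' Finset.Ioo 0 n := setOf_eval_derivative_T_real_eq_zero hn ▸ hx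
  rw [eval_T_real_node (by simp at hi ⊢; omega), ← pow_mul, mul_comm, pow_mul, neg_one_sq, one_pow]

lemma mem_Ioo_of_eval_derivative_T_real_eq_zero {n : ℕ} (hn : n ≠ 0) {x : ℝ}
    (hx : (derivative (T ℝ n)).eval x = 0) : x ∈ Set.Ioo (-1) 1 := by
  obtain ⟨i, hi, rfl⟩ : x ∈ node n '' Finset.Ioo 0 n := setOf_eval_derivative_T_real_eq_zero hn ▸ hx
  rw [Finset.mem_coe, Finset.mem_Ioo] at hi
  exact ⟨node_eq_neg_one hn ▸ node_lt le_rfl hi.2, node_eq_one (n := n) ▸ node_lt hi.2.le hi.1⟩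

lemma finite_setOf_sq_eval_T_real_eq_one {n : ℕ} (hn : n ≠ 0) :
    {x : ℝ | (T ℝ n).eval x ^ 2 = 1}.Finite := by
  refine ((Finset.Iic n).finite_toSet.image (node n)).subset fun x hx => ?_
  obtain ⟨i, hi, rfl⟩ :=
    (abs_eval_T_real_eq_one_iff hn x).1 ((abs_eq zero_le_one).2 (sq_eq_one_iff.1 hx))
  exact ⟨i, by simpa using hi, rfl⟩

end Polynomial.Chebyshev

lemma exists_ball_inter_eq_singleton {X : Type*} [PseudoMetricSpace X] {s : Set X} {p : X}
    (hp : p ∈ s) (h : ∀ᶠ q in 𝓝 p, q ∈ s → q = p) : ∃ ε > 0, s ∩ Metric.ball p ε = {p} := by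
  obtain ⟨ε, hε, hball⟩ := Metric.eventually_nhds_iff_ball.1 h
  refine ⟨ε, hε, Set.eq_singleton_iff_unique_mem.2 ⟨⟨hp, Metric.mem_ball_self hε⟩, ?_⟩⟩
  exact fun q hq => hball q hq.2 hq.1

lemma eventually_eq_of_sq_sub_two_mul_add_one_eq_zero {g : ℝ → ℝ} {x₀ : ℝ}
    (hle : ∀ᶠ x in 𝓝 x₀, g x ^ 2 ≤ 1) (hfin : {x | g x ^ 2 = 1}.Finite) :
    ∀ᶠ q in 𝓝 (x₀, g x₀), q.2 ^ 2 - 2 * q.2 * g q.1 + 1 = 0 → q = (x₀, g x₀) := by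
  have hiso : ∀ᶠ x in 𝓝 x₀, g x ^ 2 = 1 → x = x₀ := by
    filter_upwards [(hfin.sdiff (t := {x₀})).isClosed.isOpen_compl.mem_nhds (by simp)] with x hx hgx
    by_contra hne
    exact hx ⟨hgx, hne⟩
  filter_upwards [continuous_fst.continuousAt.eventually (hle.and hiso)] with q ⟨hq_le, hq_iso⟩ hq
  -- the curve equation reads `(y - g x)² = g x² - 1 ≤ 0`
  have hy : q.2 = g q.1 := by nlinarith [sq_nonneg (q.2 - g q.1)]
  have hx : q.1 = x₀ := hq_iso (by rw [hy] at hq; linarith)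
  exact Prod.ext hx (hy.trans (congrArg g hx))

lemma mem_chebZeros_iff {k : ℕ} {q : ℝ × ℝ} :
    q ∈ chebZeros k ↔ q.2 ^ 2 - 2 * q.2 * (T ℝ k).eval (q.1 + 2) + 1 = 0 := by
  rw [chebZeros, Set.mem_ofPred_eq, eval_chebCurve]

lemma chebSing_eq (k : ℕ) :
    chebSing k = (fun u => (u - 2, (T ℝ k).eval u)) '' {u | (derivative (T ℝ k)).eval u = 0} := by
  ext ⟨x, y⟩
  simp only [chebSing, Set.mem_ofPred_eq, eval_chebCurve, eval_pderiv_zero_chebCurve,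
    eval_pderiv_one_chebCurve, Set.mem_image, Prod.mk.injEq]
  constructor
  · rintro ⟨hf, hx, hy⟩
    have hyT : y = (T ℝ k).eval (x + 2) := by linarith
    have hy0 : y ≠ 0 := by rintro rfl; norm_num at hf
    exact ⟨x + 2, by simpa [hy0] using hx, by ring, hyT.symm⟩
  · rintro ⟨u, hu, rfl, rfl⟩
    have hT := sq_eval_T_real_of_eval_derivative_eq_zero hu
    simp only [sub_add_cancel, hu]
    exact ⟨by linarith, by ring, by ring⟩

lemma eventually_eq_of_mem_chebZeros {k : ℕ} (hk : k ≠ 0) {u : ℝ}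
    (hu : (derivative (T ℝ k)).eval u = 0) :
    ∀ᶠ q in 𝓝 (u - 2, (T ℝ k).eval u), q ∈ chebZeros k → q = (u - 2, (T ℝ k).eval u) := by
  have hshift : Tendsto (· + 2) (𝓝 (u - 2)) (𝓝 u) := by
    simpa using (continuous_add_const (2 : ℝ)).tendsto (u - 2)
  have hle : ∀ᶠ x in 𝓝 (u - 2), (T ℝ k).eval (x + 2) ^ 2 ≤ 1 := by
    filter_upwards [hshift.eventually
      (isOpen_Ioo.mem_nhds (mem_Ioo_of_eval_derivative_T_real_eq_zero hk hu))] with x hx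
    exact (sq_le_one_iff_abs_le_one _).2 (abs_eval_T_real_le_one k (abs_le.2 ⟨hx.1.le, hx.2.le⟩))
  have hfin : {x : ℝ | (T ℝ k).eval (x + 2) ^ 2 = 1}.Finite :=
    (finite_setOf_sq_eval_T_real_eq_one hk).preimage (add_left_injective 2).injOn
  simpa [mem_chebZeros_iff] using eventually_eq_of_sq_sub_two_mul_add_one_eq_zero hle hfin

/-- For every `k ≥ 1`, the curve `f_k(x,y) = y² − 2y·T_k(x+2) + 1 = 0` has exactly
`k − 1` singular real points, and each of them is an isolated point of the real zero
set of `f_k` (a solitary point of the curve). -/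
theorem chebCurve_solitary_points (k : ℕ) (hk : 1 ≤ k) :
    (chebSing k).ncard = k - 1 ∧
    ∀ p ∈ chebSing k, ∃ ε > (0 : ℝ), chebZeros k ∩ Metric.ball p ε = {p} := by
  have hk0 : k ≠ 0 := Nat.one_le_iff_ne_zero.1 hk
  refine ⟨?_, fun p hp => exists_ball_inter_eq_singleton hp.1 ?_⟩
  · rw [chebSing_eq, Set.ncard_image_of_injective _ fun u v h => by simpa using congrArg Prod.fst h,
      ncard_setOf_eval_derivative_T_real_eq_zero hk0]
  · obtain ⟨u, hu, rfl⟩ := chebSing_eq k ▸ hp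
    exact eventually_eq_of_mem_chebZeros hk0 hu
end

section
/- For integers m > p ≥ 1 with m − p odd, define r(m,p) = [∏_{j=1}^{p} ((m−p−1+2j)/2)! · (mp)!] / [∏_{j=1}^{p} (m−p−1+2j)! · (mp/2)!] (all arguments are natural numbers since m − p is odd, which forces mp even). Then for every fixed integer p ≥ 2, writing m = p + 1 + 2k, the quotient log r(m,p) / (m·p·log p) tends to 1/2 as k → ∞. -/
/-!
Put `m = p + 1 + 2k`, `a_j = k + j` and `S = ∑_{j=1}^p a_j = mp/2`. Then
`r(m,p) = D(S) / ∏ D(a_j)` with `D(n) = (2n)!/n!`, and Stirling's formula gives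
`log D(n) = n log n + (2 log 2 - 1) n + o(n)`. Because `∑ a_j = S` the linear terms cancel,
so `log r = S · H + o(S)`, where `H` is the Shannon entropy of the weights `a_j / S`. These
weights tend to the uniform distribution on `p` points, whose entropy is `log p`, while
`mp log p = 2 S log p`.
-/

/-- The ratio `r(m,p)` of Schubert's number of complex curves to the Eremenko–Gabrielov
lower bound on the number of real curves:
`r(m,p) = [∏_{j=1}^{p} ((m−p−1+2j)/2)! · (mp)!] / [∏_{j=1}^{p} (m−p−1+2j)! · (mp/2)!]`.
(When `m − p` is odd all the divisions by 2 are exact.) -/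
noncomputable def schubertRatio (m p : ℕ) : ℝ :=
  (((∏ j ∈ Finset.Icc 1 p, Nat.factorial ((m - p - 1 + 2 * j) / 2)) *
      Nat.factorial (m * p) : ℕ) : ℝ) /
  (((∏ j ∈ Finset.Icc 1 p, Nat.factorial (m - p - 1 + 2 * j)) *
      Nat.factorial (m * p / 2) : ℕ) : ℝ)

open Real Filter Finset Asymptotics Topology
open scoped Nat

noncomputable def stirlingRemainder (n : ℕ) : ℝ := log n ! - (n * log n - n)

lemma stirlingRemainder_eq_log_stirlingSeq (n : ℕ) :
    stirlingRemainder n = log (Stirling.stirlingSeq n) + 1 / 2 * log (2 * n) := by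
  rcases Nat.eq_zero_or_pos n with rfl | hn
  · simp [stirlingRemainder]
  · rw [Stirling.log_stirlingSeq_formula, log_div (by positivity) (exp_pos 1).ne', log_exp,
      stirlingRemainder]
    ring

lemma isLittleO_stirlingRemainder : stirlingRemainder =o[atTop] (fun n : ℕ => (n : ℝ)) := by
  have hseq : (fun n => log (Stirling.stirlingSeq n)) =o[atTop] (fun n : ℕ => (n : ℝ)) :=
    ((Stirling.tendsto_stirlingSeq_sqrt_pi.log (by positivity)).isBigO_one ℝ).trans_isLittleO
      ((isLittleO_one_left_iff ℝ).2 (tendsto_norm_atTop_atTop.comp tendsto_natCast_atTop_atTop))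
  have hlog : (fun n : ℕ => log (2 * n)) =o[atTop] (fun n : ℕ => (n : ℝ)) :=
    (isLittleO_log_id_atTop.comp_tendsto
      (tendsto_natCast_atTop_atTop.const_mul_atTop two_pos)).trans_isBigO
      ((isBigO_refl _ _).const_mul_left 2)
  rw [show stirlingRemainder = _ from funext stirlingRemainder_eq_log_stirlingSeq]
  exact hseq.add (hlog.const_mul_left _)

noncomputable def stirlingRemainderTwoMul (n : ℕ) : ℝ :=
  stirlingRemainder (2 * n) - stirlingRemainder n

lemma isLittleO_stirlingRemainderTwoMul :
    stirlingRemainderTwoMul =o[atTop] (fun n : ℕ => (n : ℝ)) := by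
  have h2 : (fun n : ℕ => stirlingRemainder (2 * n)) =o[atTop] (fun n : ℕ => (n : ℝ)) :=
    (isLittleO_stirlingRemainder.comp_tendsto
      (tendsto_id.const_mul_atTop' two_pos)).trans_isBigO
      (IsBigO.of_bound 2 (Eventually.of_forall fun n => by simp))
  exact h2.sub isLittleO_stirlingRemainder

lemma log_factorial_two_mul_div_factorial (n : ℕ) :
    log ((2 * n)! / n ! : ℝ) =
      n * log n + (2 * log 2 - 1) * n + stirlingRemainderTwoMul n := by
  rcases Nat.eq_zero_or_pos n with rfl | hn
  · simp [stirlingRemainderTwoMul]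
  · rw [log_div (by positivity) (by positivity), stirlingRemainderTwoMul, stirlingRemainder,
      stirlingRemainder]
    push_cast
    rw [log_mul two_ne_zero (by positivity)]
    ring

lemma mul_negMulLog_div {a S : ℕ} (h : a ≤ S) :
    (S : ℝ) * negMulLog (a / S) = a * log S - a * log a := by
  rcases Nat.eq_zero_or_pos a with rfl | ha
  · simp
  · have hS : (S : ℝ) ≠ 0 := by exact_mod_cast (ha.trans_le h).ne'
    rw [negMulLog, log_div (by exact_mod_cast ha.ne') hS]
    field_simp
    ring

lemma log_factorial_two_mul_div_prod {ι : Type*} (s : Finset ι) (a : ι → ℕ) {S : ℕ}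
    (hS : ∑ i ∈ s, a i = S) :
    log ((2 * S)! / S ! / ∏ i ∈ s, ((2 * a i)! / (a i)! : ℝ)) =
      S * ∑ i ∈ s, negMulLog (a i / S) +
        (stirlingRemainderTwoMul S - ∑ i ∈ s, stirlingRemainderTwoMul (a i)) := by
  subst hS
  have hD : ∀ n : ℕ, ((2 * n)! / n ! : ℝ) ≠ 0 := fun n => by positivity
  rw [log_div (hD _) (prod_ne_zero_iff.2 fun i _ => hD (a i)), log_prod fun i _ => hD (a i),
    log_factorial_two_mul_div_factorial, mul_sum,
    sum_congr rfl fun i hi => mul_negMulLog_div (single_le_sum (fun _ _ => Nat.zero_le _) hi)]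
  simp only [log_factorial_two_mul_div_factorial, sum_add_distrib, sum_sub_distrib, ← sum_mul,
    ← mul_sum]
  push_cast
  ring

def shiftedSum (p k : ℕ) : ℕ := ∑ j ∈ Icc 1 p, (k + j)

lemma shiftedSum_eq (p k : ℕ) : shiftedSum p k = p * k + shiftedSum p 0 := by
  simp only [shiftedSum, zero_add]
  rw [sum_add_distrib, sum_const, Nat.card_Icc, Nat.add_sub_cancel, smul_eq_mul, mul_comm]

lemma shiftedSum_pos {p : ℕ} (hp : p ≠ 0) (k : ℕ) : 0 < shiftedSum p k :=
  sum_pos (fun j hj => by grind) (nonempty_Icc.2 (Nat.one_le_iff_ne_zero.2 hp))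

lemma two_mul_shiftedSum (p k : ℕ) : 2 * shiftedSum p k = (p + 1 + 2 * k) * p := by
  induction p with
  | zero => simp [shiftedSum]
  | succ p ih =>
    rw [shiftedSum, sum_Icc_succ_top (by omega), mul_add, ← shiftedSum, ih]
    ring

lemma schubertRatio_eq (p k : ℕ) :
    schubertRatio (p + 1 + 2 * k) p =
      (2 * shiftedSum p k)! / (shiftedSum p k)! /
        ∏ j ∈ Icc 1 p, ((2 * (k + j))! / (k + j)! : ℝ) := by
  have hhalf : ∀ j, (p + 1 + 2 * k - p - 1 + 2 * j) / 2 = k + j := fun j => by omega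
  have hfull : ∀ j, p + 1 + 2 * k - p - 1 + 2 * j = 2 * (k + j) := fun j => by omega
  rw [schubertRatio, ← two_mul_shiftedSum, Nat.mul_div_cancel_left _ two_pos]
  simp only [hhalf]
  simp only [hfull, prod_div_distrib]
  push_cast
  field_simp

lemma tendsto_natCast_add_div_mul_add (a b : ℝ) {c : ℝ} (hc : c ≠ 0) :
    Tendsto (fun k : ℕ => ((k : ℝ) + a) / (c * k + b)) atTop (𝓝 (1 / c)) := by
  have h := ((tendsto_const_nhds (x := (1 : ℝ))).add
    (tendsto_const_div_atTop_nhds_zero_nat a)).div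
    ((tendsto_const_nhds (x := c)).add (tendsto_const_div_atTop_nhds_zero_nat b))
    (by simpa using hc)
  rw [add_zero, add_zero] at h
  refine h.congr' ((eventually_ne_atTop 0).mono fun k hk => ?_)
  simp only [Pi.div_apply]
  field_simp

lemma tendsto_div_shiftedSum {p : ℕ} (hp : p ≠ 0) (j : ℕ) :
    Tendsto (fun k => ((k + j : ℕ) : ℝ) / shiftedSum p k) atTop (𝓝 (1 / p)) := by
  refine (tendsto_natCast_add_div_mul_add j (shiftedSum p 0) (c := p) (by exact_mod_cast hp)).congr
    fun k => ?_
  rw [shiftedSum_eq p k]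
  push_cast
  ring

lemma tendsto_sum_negMulLog_div_shiftedSum {p : ℕ} (hp : p ≠ 0) :
    Tendsto (fun k => ∑ j ∈ Icc 1 p, negMulLog (((k + j : ℕ) : ℝ) / shiftedSum p k)) atTop
      (𝓝 (log p)) := by
  have h := tendsto_finsetSum (Icc 1 p) fun j _ =>
    (continuous_negMulLog.tendsto _).comp (tendsto_div_shiftedSum hp j)
  have hp' : (p : ℝ) ≠ 0 := by exact_mod_cast hp
  have hval : ∑ _j ∈ Icc 1 p, negMulLog (1 / p) = log p := by
    rw [sum_const, Nat.card_Icc, Nat.add_sub_cancel, nsmul_eq_mul, negMulLog, one_div, log_inv]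
    field_simp
  rw [hval] at h
  exact h

lemma isLittleO_stirlingRemainderTwoMul_shiftedSum {p : ℕ} (hp : p ≠ 0) :
    (fun k => stirlingRemainderTwoMul (shiftedSum p k) -
        ∑ j ∈ Icc 1 p, stirlingRemainderTwoMul (k + j)) =o[atTop]
      (fun k => (shiftedSum p k : ℝ)) := by
  have hS : Tendsto (shiftedSum p) atTop atTop := by
    refine tendsto_atTop_mono (fun k => ?_) tendsto_id
    rw [shiftedSum_eq]
    exact Nat.le_add_right_of_le (Nat.le_mul_of_pos_left k (Nat.pos_of_ne_zero hp))
  refine (isLittleO_stirlingRemainderTwoMul.comp_tendsto hS).sub (IsLittleO.fun_sum fun j hj => ?_)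
  refine (isLittleO_stirlingRemainderTwoMul.comp_tendsto (tendsto_add_atTop_nat j)).trans_isBigO
    (isBigO_of_le _ fun k => ?_)
  simp only [Function.comp, Real.norm_natCast]
  exact_mod_cast single_le_sum (f := fun j => k + j) (fun _ _ => Nat.zero_le _) hj

/-- For every fixed `p ≥ 2`, writing `m = p + 1 + 2k` (so `m > p` and `m − p` is odd),
`log r(m,p) / (mp·log p) → 1/2` as `k → ∞`: asymptotically, the Eremenko–Gabrielov
number of real curves is about the square root of Schubert's number of complex
curves. -/
theorem schubertRatio_log_asymptotic (p : ℕ) (hp : 2 ≤ p) :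
    Filter.Tendsto
      (fun k : ℕ =>
        Real.log (schubertRatio (p + 1 + 2 * k) p) /
          (((p + 1 + 2 * k : ℕ) : ℝ) * (p : ℝ) * Real.log p))
      Filter.atTop (nhds (1 / 2)) := by
  have hp0 : p ≠ 0 := by omega
  have hlogp : log p ≠ 0 := (log_pos (by exact_mod_cast hp)).ne'
  have hlim := ((tendsto_sum_negMulLog_div_shiftedSum hp0).add
    (isLittleO_stirlingRemainderTwoMul_shiftedSum hp0).tendsto_div_nhds_zero).div_const
    (2 * log p)
  rw [add_zero, div_mul_cancel_right₀ hlogp, ← one_div] at hlim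
  refine hlim.congr fun k => ?_
  have hS : (shiftedSum p k : ℝ) ≠ 0 := by exact_mod_cast (shiftedSum_pos hp0 k).ne'
  have hmp : ((p + 1 + 2 * k : ℕ) : ℝ) * p = 2 * shiftedSum p k := by
    exact_mod_cast (two_mul_shiftedSum p k).symm
  rw [schubertRatio_eq, log_factorial_two_mul_div_prod (Icc 1 p) (k + ·) (S := shiftedSum p k) rfl,
    hmp]
  field_simp
end

section
/- For integers m ≥ 1 and p ≥ 1, define Schubert's number N(m,p) = [1!·2!⋯(p−1)!·(mp)!] / [m!·(m+1)!⋯(m+p−1)!]. Then for every fixed integer p ≥ 2, the quotient log N(m,p) / (m·p·log p) tends to 1 as m → ∞. -/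
/-!
By Stirling's formula `log n! = n log n - n + o(n)`. As `f n = n log n - n` satisfies
`f (m p) = p f m + m p log p`, this gives `log (m p)! - p log m! = m p log p + o(m)`. Moreover
`0 ≤ log (m + j)! - log m! ≤ j log (m + j) = o(m)` for each `j < p`, and `log ∏ j!` is a
constant, so `log N(m,p) = m p log p + o(m)`, i.e. `log N(m,p) ~ m p log p`.
-/

/-- Schubert's number `N(m,p) = 1!·2!⋯(p−1)!·(mp)! / (m!·(m+1)!⋯(m+p−1)!)`, the number
of complex rational curves of degree `d` in `ℙ^r` with `(r+1)(d−r)` prescribed simple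
flexes, where `m = max(r+1, d−r)` and `p = min(r+1, d−r)`. -/
noncomputable def schubertNumber (m p : ℕ) : ℝ :=
  (((∏ j ∈ Finset.range p, Nat.factorial j) * Nat.factorial (m * p) : ℕ) : ℝ) /
  (((∏ j ∈ Finset.range p, Nat.factorial (m + j)) : ℕ) : ℝ)

open Filter Finset Real Asymptotics
open scoped Nat

lemma isLittleO_log_natCast_add_atTop (j : ℕ) :
    (fun m : ℕ => log ((m : ℝ) + j)) =o[atTop] (fun m => (m : ℝ)) := by
  have hshift : Tendsto (fun m : ℕ => (m : ℝ) + j) atTop atTop :=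
    tendsto_atTop_add_const_right _ _ tendsto_natCast_atTop_atTop
  refine (isLittleO_log_id_atTop.comp_tendsto hshift).trans_isBigO ?_
  exact (isBigO_refl _ _).add
    ((isLittleO_const_id_atTop (j : ℝ)).comp_tendsto tendsto_natCast_atTop_atTop).isBigO

lemma isLittleO_log_factorial_sub_atTop :
    (fun n : ℕ => log n ! - (n * log n - n)) =o[atTop] (fun n => (n : ℝ)) := by
  have hlog : (fun n : ℕ => 2⁻¹ * log (2 * n)) =o[atTop] (fun n => (n : ℝ)) :=
    ((isLittleO_log_id_atTop.comp_tendsto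
      (tendsto_natCast_atTop_atTop.const_mul_atTop two_pos)).trans_isBigO
      (isBigO_const_mul_self 2 _ _)).const_mul_left 2⁻¹
  have hseq : (fun n : ℕ => log (Stirling.stirlingSeq n)) =o[atTop] (fun n => (n : ℝ)) :=
    ((Stirling.tendsto_stirlingSeq_sqrt_pi.log (by positivity)).isBigO_one ℝ).trans_isLittleO
      ((isLittleO_one_left_iff ℝ).2 <| tendsto_norm_atTop_atTop.comp tendsto_natCast_atTop_atTop)
  refine (hlog.add hseq).congr' ?_ EventuallyEq.rfl
  filter_upwards [eventually_ne_atTop 0] with n hn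
  simp only [Stirling.log_stirlingSeq_formula,
    log_div (Nat.cast_ne_zero.2 hn) (exp_pos 1).ne', log_exp]
  ring

lemma log_factorial_le_log_factorial_add (m j : ℕ) : log m ! ≤ log (m + j)! :=
  log_le_log (by positivity) (mod_cast Nat.factorial_le (Nat.le_add_right m j))

lemma log_factorial_add_le (m j : ℕ) : log (m + j)! ≤ log m ! + j * log ((m : ℝ) + j) := by
  rcases Nat.eq_zero_or_pos j with rfl | hj
  · simp
  have hfac : ((m + j)! : ℝ) ≤ m ! * ((m : ℝ) + j) ^ j := by
    rw [← Nat.factorial_mul_ascFactorial]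
    exact_mod_cast Nat.mul_le_mul_left _ (Nat.ascFactorial_le_pow_add m j)
  calc log (m + j)! ≤ log (m ! * ((m : ℝ) + j) ^ j) := log_le_log (by positivity) hfac
    _ = log m ! + j * log ((m : ℝ) + j) := by
      rw [log_mul (by positivity) (by positivity), log_pow]

lemma isLittleO_log_factorial_add_sub_atTop (j : ℕ) :
    (fun m : ℕ => log (m + j)! - log m !) =o[atTop] (fun m => (m : ℝ)) := by
  refine IsBigO.trans_isLittleO ?_ ((isLittleO_log_natCast_add_atTop j).const_mul_left (j : ℝ))
  refine IsBigO.of_bound 1 (Eventually.of_forall fun m => ?_)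
  have hj : 0 ≤ log ((m : ℝ) + j) := by exact_mod_cast log_natCast_nonneg (m + j)
  rw [norm_of_nonneg (sub_nonneg.2 (log_factorial_le_log_factorial_add m j)),
    norm_of_nonneg (by positivity), one_mul]
  linarith [log_factorial_add_le m j]

lemma isLittleO_log_factorial_mul_sub_atTop (p : ℕ) :
    (fun m : ℕ => log (m * p)! - p * log m ! - m * p * log p) =o[atTop] (fun m => (m : ℝ)) := by
  rcases Nat.eq_zero_or_pos p with rfl | hp
  · simp
  have hE := isLittleO_log_factorial_sub_atTop
  have hmul : Tendsto (fun m : ℕ => m * p) atTop atTop := tendsto_id.atTop_mul_const' hp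
  have hEmul : (fun m : ℕ => log (m * p)! - ((m * p : ℕ) * log (m * p : ℕ) - (m * p : ℕ)))
      =o[atTop] (fun m => (m : ℝ)) :=
    (hE.comp_tendsto hmul).trans_isBigO <|
      (isBigO_const_mul_self (p : ℝ) _ _).congr_left fun m => by simp [mul_comm]
  refine (hEmul.sub (hE.const_mul_left p)).congr' ?_ EventuallyEq.rfl
  filter_upwards [eventually_ne_atTop 0] with m hm
  push_cast
  rw [log_mul (Nat.cast_ne_zero.2 hm) (Nat.cast_ne_zero.2 hp.ne')]
  ring

lemma log_schubertNumber (m p : ℕ) :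
    log (schubertNumber m p) =
      ∑ j ∈ range p, log j ! + log (m * p)! - ∑ j ∈ range p, log (m + j)! := by
  have hfac : ∀ n : ℕ, (n ! : ℝ) ≠ 0 := fun n => by positivity
  have hprod : ∀ f : ℕ → ℕ, ∏ j ∈ range p, ((f j)! : ℝ) ≠ 0 :=
    fun f => prod_ne_zero_iff.2 fun j _ => hfac (f j)
  rw [schubertNumber]
  push_cast
  rw [log_div (mul_ne_zero (hprod fun j => j) (hfac _)) (hprod _),
    log_mul (hprod fun j => j) (hfac _), log_prod (fun j _ => hfac j),
    log_prod (fun j _ => hfac (m + j))]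

lemma isLittleO_log_schubertNumber_sub_atTop (p : ℕ) :
    (fun m : ℕ => log (schubertNumber m p) - m * p * log p) =o[atTop] (fun m => (m : ℝ)) := by
  have hconst : (fun _ : ℕ => ∑ j ∈ range p, log j !) =o[atTop] (fun m => (m : ℝ)) :=
    (isLittleO_const_id_atTop _).comp_tendsto tendsto_natCast_atTop_atTop
  have hshift := IsLittleO.sum fun j (_ : j ∈ range p) => isLittleO_log_factorial_add_sub_atTop j
  have hmain := isLittleO_log_factorial_mul_sub_atTop p
  refine ((hconst.add hmain).sub hshift).congr' (Eventually.of_forall fun m => ?_)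
    EventuallyEq.rfl
  simp only [Finset.sum_apply, sum_sub_distrib, sum_const, card_range,
    nsmul_eq_mul, log_schubertNumber]
  ring

/-- For every fixed `p ≥ 2`, `log N(m,p) / (mp·log p) → 1` as `m → ∞`. -/
theorem schubertNumber_log_asymptotic (p : ℕ) (hp : 2 ≤ p) :
    Filter.Tendsto
      (fun m : ℕ =>
        Real.log (schubertNumber m p) / ((m : ℝ) * (p : ℝ) * Real.log p))
      Filter.atTop (nhds 1) := by
  have hc : (p : ℝ) * log p ≠ 0 :=
    mul_ne_zero (by positivity) (log_pos (by exact_mod_cast hp)).ne'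
  have hequiv :
      (fun m : ℕ => log (schubertNumber m p)) ~[atTop] (fun m => (m : ℝ) * p * log p) :=
    (isLittleO_log_schubertNumber_sub_atTop p).trans_isBigO <|
      ((isBigO_refl _ _).const_mul_right hc).congr_right fun m => by ring
  refine (isEquivalent_iff_tendsto_one ?_).1 hequiv
  filter_upwards [eventually_ne_atTop 0] with m hm
  rw [mul_assoc]
  exact mul_ne_zero (Nat.cast_ne_zero.2 hm) hc
end
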